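/- arXiv:1101.3523 — 5 statements merged into one kernel-verified Lean document; each statement's English description precedes it below -/
import Mathlib

section
/- Let X be a compact metric space, Γ a monoid acting minimally on X by continuous maps, H a real Hilbert space, and (Ψ, ρ) a continuous cocycle of affine isometries of H over this action. Let M ⊆ X × H be a nonempty compact set (for the product of the topology of X and the norm topology of H) that is forward-invariant under the skew action: for every f ∈ Γ and (x,v) ∈ M, the point (f·x, Ψ(f,x)v + ρ(f,x)) belongs to M. For x ∈ X let M_x := {v ∈ H : (x,v) ∈ M}. Then the function x ↦ diam(M_x) is constant on X. -/
/-- For a nonempty compact set `M ⊆ X × H` that is forward-invariant under the skew action of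
a cocycle of affine isometries over a minimal dynamics, the diameter of the fibers
`M_x = {v | (x,v) ∈ M}` is constant in `x`. -/
theorem fiber_diameter_constant
    {X : Type*} [MetricSpace X] [CompactSpace X]
    {Γ : Type*} [Monoid Γ]
    {H : Type*} [NormedAddCommGroup H] [InnerProductSpace ℝ H] [CompleteSpace H]
    (act : Γ → X → X)
    (hact_one : ∀ x, act 1 x = x)
    (hact_mul : ∀ f g x, act (f * g) x = act f (act g x))
    (hact_cont : ∀ f, Continuous (act f))
    (hmin : ∀ x, Dense (Set.range fun f => act f x))
    (Ψ : Γ → X → (H ≃ₗᵢ[ℝ] H)) (ρ : Γ → X → H)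
    (hΨ_cont : ∀ f, Continuous fun x =>
      ((Ψ f x).toLinearIsometry.toContinuousLinearMap : H →L[ℝ] H))
    (hρ_cont : ∀ f, Continuous fun x => ρ f x)
    (hΨ_coc : ∀ f g x v, Ψ (f * g) x v = Ψ f (act g x) (Ψ g x v))
    (hρ_coc : ∀ f g x, ρ (f * g) x = ρ f (act g x) + Ψ f (act g x) (ρ g x))
    (M : Set (X × H)) (hM_ne : M.Nonempty) (hM_comp : IsCompact M)
    (hM_inv : ∀ f x v, (x, v) ∈ M → (act f x, Ψ f x v + ρ f x) ∈ M) :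
    ∀ x y : X, Metric.diam {v : H | (x, v) ∈ M} = Metric.diam {v : H | (y, v) ∈ M} := by
  have hbound : ∀ z : X, Bornology.IsBounded {v : H | (z, v) ∈ M} := by
    intro z
    refine (hM_comp.image continuous_snd).isBounded.subset ?_
    intro v hv
    exact ⟨(z, v), hv, rfl⟩
  have key : ∀ x y : X,
      Metric.diam {v : H | (x, v) ∈ M} ≤ Metric.diam {v : H | (y, v) ∈ M} := by
    intro x y
    refine Metric.diam_le_of_forall_dist_le Metric.diam_nonneg ?_
    intro v hv w hw
    have hsel : ∀ n : ℕ, ∃ f : Γ, dist (act f x) y < 1 / (n + 1) := by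
      intro n
      have hy : y ∈ closure (Set.range fun f => act f x) := hmin x y
      rw [Metric.mem_closure_iff] at hy
      obtain ⟨z, ⟨f, rfl⟩, hz⟩ := hy (1 / (n + 1)) (by positivity)
      exact ⟨f, by rwa [dist_comm]⟩
    choose f hf using hsel
    set p : ℕ → X × H := fun n => (act (f n) x, Ψ (f n) x v + ρ (f n) x) with hp
    set q : ℕ → X × H := fun n => (act (f n) x, Ψ (f n) x w + ρ (f n) x) with hq
    have hpM : ∀ n, p n ∈ M := fun n => hM_inv (f n) x v hv
    have hqM : ∀ n, q n ∈ M := fun n => hM_inv (f n) x w hw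
    have hdist : ∀ n, dist ((p n).2) ((q n).2) = dist v w := by
      intro n
      show dist (Ψ (f n) x v + ρ (f n) x) (Ψ (f n) x w + ρ (f n) x) = dist v w
      rw [dist_add_right]
      exact (Ψ (f n) x).dist_map v w
    have hx1 : Filter.Tendsto (fun n => act (f n) x) Filter.atTop (nhds y) := by
      rw [tendsto_iff_dist_tendsto_zero]
      exact squeeze_zero (fun n => dist_nonneg) (fun n => (hf n).le)
        tendsto_one_div_add_atTop_nhds_zero_nat
    obtain ⟨a, haM, φ, hφ, hconv⟩ := (hM_comp.prod hM_comp).tendsto_subseq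
      (x := fun n => (p n, q n)) (fun n => Set.mk_mem_prod (hpM n) (hqM n))
    have hconv1 : Filter.Tendsto (fun k => p (φ k)) Filter.atTop (nhds a.1) :=
      (continuous_fst.tendsto a).comp hconv
    have hconv2 : Filter.Tendsto (fun k => q (φ k)) Filter.atTop (nhds a.2) :=
      (continuous_snd.tendsto a).comp hconv
    have hP : Filter.Tendsto (fun k => (p (φ k)).2) Filter.atTop (nhds a.1.2) :=
      (continuous_snd.tendsto a.1).comp hconv1
    have hQ : Filter.Tendsto (fun k => (q (φ k)).2) Filter.atTop (nhds a.2.2) :=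
      (continuous_snd.tendsto a.2).comp hconv2
    have hy1 : a.1.1 = y := by
      have h1 : Filter.Tendsto (fun k => (p (φ k)).1) Filter.atTop (nhds a.1.1) :=
        (continuous_fst.tendsto a.1).comp hconv1
      have h2 : Filter.Tendsto (fun k => (p (φ k)).1) Filter.atTop (nhds y) :=
        hx1.comp hφ.tendsto_atTop
      exact tendsto_nhds_unique h1 h2
    have hy2 : a.2.1 = y := by
      have h1 : Filter.Tendsto (fun k => (q (φ k)).1) Filter.atTop (nhds a.2.1) :=
        (continuous_fst.tendsto a.2).comp hconv2
      have h2 : Filter.Tendsto (fun k => (q (φ k)).1) Filter.atTop (nhds y) :=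
        hx1.comp hφ.tendsto_atTop
      exact tendsto_nhds_unique h1 h2
    have hdPQ : dist v w = dist a.1.2 a.2.2 := by
      have h1 : Filter.Tendsto (fun k => dist ((p (φ k)).2) ((q (φ k)).2)) Filter.atTop
          (nhds (dist a.1.2 a.2.2)) := hP.dist hQ
      have h2 : (fun k => dist ((p (φ k)).2) ((q (φ k)).2)) = fun _ => dist v w := by
        funext k; exact hdist (φ k)
      rw [h2] at h1
      exact tendsto_nhds_unique tendsto_const_nhds h1
    have hmem1 : a.1.2 ∈ {v : H | (y, v) ∈ M} := by
      have : a.1 ∈ M := haM.1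
      rw [show a.1 = (a.1.1, a.1.2) from rfl, hy1] at this
      exact this
    have hmem2 : a.2.2 ∈ {v : H | (y, v) ∈ M} := by
      have : a.2 ∈ M := haM.2
      rw [show a.2 = (a.2.1, a.2.2) from rfl, hy2] at this
      exact this
    rw [hdPQ]
    exact Metric.dist_le_diam_of_mem (hbound y) hmem1 hmem2
  exact fun x y => le_antisymm (key x y) (key y x)
end

section
/- Let H be a real Hilbert space and let B ⊆ H be a nonempty bounded subset with diameter D. Suppose v is the midpoint of a segment between two points v₁, v₂ ∈ B with dist(v₁, v₂) = D, and w is the midpoint of a segment between two points w₁, w₂ ∈ B with dist(w₁, w₂) = D; that is, v = (v₁ + v₂)/2 and w = (w₁ + w₂)/2. Then dist(v, w) ≤ D/√2. -/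
/-- Midpoints of diameters of a bounded subset of a Hilbert space: if `v` and `w` are the
midpoints of two pairs of points of `B` realizing the diameter `D` of `B`, then
`dist v w ≤ D / √2`. -/
theorem midpoint_of_diameters_dist_le
    {H : Type*} [NormedAddCommGroup H] [InnerProductSpace ℝ H] [CompleteSpace H]
    (B : Set H) (hB : B.Nonempty) (hBbdd : Bornology.IsBounded B)
    (v₁ v₂ w₁ w₂ : H)
    (hv₁ : v₁ ∈ B) (hv₂ : v₂ ∈ B) (hw₁ : w₁ ∈ B) (hw₂ : w₂ ∈ B)
    (hv : dist v₁ v₂ = Metric.diam B) (hw : dist w₁ w₂ = Metric.diam B) :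
    dist (midpoint ℝ v₁ v₂) (midpoint ℝ w₁ w₂) ≤ Metric.diam B / Real.sqrt 2 := by
  set D := Metric.diam B with hD
  have hD0 : 0 ≤ D := Metric.diam_nonneg
  have h1 : dist v₁ w₁ ≤ D := Metric.dist_le_diam_of_mem hBbdd hv₁ hw₁
  have h2 : dist v₂ w₂ ≤ D := Metric.dist_le_diam_of_mem hBbdd hv₂ hw₂
  have h3 : dist v₁ w₂ ≤ D := Metric.dist_le_diam_of_mem hBbdd hv₁ hw₂
  have h4 : dist v₂ w₁ ≤ D := Metric.dist_le_diam_of_mem hBbdd hv₂ hw₁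
  have e : dist (midpoint ℝ v₁ v₂) (midpoint ℝ w₁ w₂)
      = ‖(v₁ - w₁) + (v₂ - w₂)‖ / 2 := by
    rw [dist_eq_norm, midpoint_eq_smul_add, midpoint_eq_smul_add, ← smul_sub,
      norm_smul]
    rw [invOf_eq_inv, norm_inv, Real.norm_two, inv_mul_eq_div]
    congr 2
    abel
  have p1 := parallelogram_law_with_norm ℝ (v₁ - w₁) (v₂ - w₂)
  have p2 := parallelogram_law_with_norm ℝ (v₁ - w₂) (v₂ - w₁)
  have p3 := parallelogram_law_with_norm ℝ (v₁ - v₂) (w₁ - w₂)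
  have r1 : (v₁ - w₁) - (v₂ - w₂) = (v₁ - v₂) - (w₁ - w₂) := by abel
  have r2 : (v₁ - w₂) + (v₂ - w₁) = (v₁ - w₁) + (v₂ - w₂) := by abel
  have r3 : (v₁ - w₂) - (v₂ - w₁) = (v₁ - v₂) + (w₁ - w₂) := by abel
  rw [r1] at p1
  rw [r2, r3] at p2
  have n1 : ‖v₁ - w₁‖ = dist v₁ w₁ := (dist_eq_norm _ _).symm
  have n2 : ‖v₂ - w₂‖ = dist v₂ w₂ := (dist_eq_norm _ _).symm
  have n3 : ‖v₁ - w₂‖ = dist v₁ w₂ := (dist_eq_norm _ _).symm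
  have n4 : ‖v₂ - w₁‖ = dist v₂ w₁ := (dist_eq_norm _ _).symm
  have n5 : ‖v₁ - v₂‖ = D := by rw [← dist_eq_norm, hv]
  have n6 : ‖w₁ - w₂‖ = D := by rw [← dist_eq_norm, hw]
  rw [n1, n2] at p1
  rw [n3, n4] at p2
  rw [n5, n6] at p3
  have key : ‖(v₁ - w₁) + (v₂ - w₂)‖ ^ 2 ≤ 2 * D ^ 2 := by
    nlinarith [dist_nonneg (x := v₁) (y := w₁), dist_nonneg (x := v₂) (y := w₂),
      dist_nonneg (x := v₁) (y := w₂), dist_nonneg (x := v₂) (y := w₁),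
      norm_nonneg ((v₁ - w₁) + (v₂ - w₂))]
  have hs2 : (0:ℝ) < Real.sqrt 2 := by positivity
  have hX : ‖(v₁ - w₁) + (v₂ - w₂)‖ ≤ Real.sqrt 2 * D := by
    have h' : ‖(v₁ - w₁) + (v₂ - w₂)‖ ≤ Real.sqrt (2 * D ^ 2) :=
      (Real.le_sqrt (norm_nonneg _) (by positivity)).mpr key
    calc ‖(v₁ - w₁) + (v₂ - w₂)‖ ≤ Real.sqrt (2 * D ^ 2) := h'
      _ = Real.sqrt 2 * D := by
          rw [Real.sqrt_mul (by norm_num), Real.sqrt_sq hD0]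
  have h2eq : D / Real.sqrt 2 = Real.sqrt 2 * D / 2 := by
    rw [div_eq_div_iff hs2.ne' (by norm_num : (2:ℝ) ≠ 0)]
    linear_combination -D * Real.sq_sqrt (by norm_num : (0:ℝ) ≤ 2)
  rw [e, h2eq]
  gcongr
end

section
/- Let X be a compact metric space, Γ a monoid acting minimally on X by continuous maps, H a real separable Hilbert space, and (Ψ, ρ) a continuous cocycle of affine isometries of H over this action. Endow X × H with the product of the topology of X and the weak topology of H. Let 𝓕 be the family of nonempty subsets M ⊆ X × H that are compact for this topology, forward-invariant under the skew action (for all f ∈ Γ, (x,v) ∈ M implies (f·x, Ψ(f,x)v + ρ(f,x)) ∈ M), and convex along the fibers (for each x ∈ X, the fiber M_x := {v : (x,v) ∈ M} is a convex subset of H). If M is a minimal element of 𝓕 with respect to inclusion (no proper nonempty subset of M belongs to 𝓕), then for every x ∈ X the fiber M_x consists of exactly one vector. -/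
/-!
Fibers are nonempty because the projection of `M` to `X` is closed and contains an orbit.

Weakly compact sets are norm bounded (uniform boundedness applied to the bidual embedding), and
on bounded sets the pairing `(x, v) ↦ ⟪a x, v⟫` is jointly continuous for the weak topology in
`v` whenever `a` is norm continuous. Hence, for every `v₀` and `c`, the points of `M` whose whole
orbit stays in the half-space `⟪v₀, ·⟫ ≤ c` form again a weakly compact, invariant, fiberwise
convex set; by minimality it is empty as soon as `c` is below the supremum of `⟪v₀, ·⟫` on `M`.
So every orbit in `M` comes arbitrarily close to that supremum.

Suppose a fiber contains `u ≠ w`, and let `ε = ‖u - w‖`. Choose `v₀` in `M` with `‖v₀‖²` within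
`ε² / 8` of the supremum of `‖·‖²` on `M`. Some element of the orbit of the midpoint of `u` and
`w` brings `⟪v₀, ·⟫` within `ε² / 32` of its supremum, so the images of `u` and `w` bring it
within `ε² / 16`. In a Hilbert space such a slice has diameter less than `ε`, while the images of
`u` and `w` are still at distance `ε`.
-/

noncomputable def weakTopology (H : Type*) [NormedAddCommGroup H] [InnerProductSpace ℝ H] :
    TopologicalSpace H :=
  TopologicalSpace.induced (fun v => fun l : H →L[ℝ] ℝ => l v) inferInstance

open Bornology Filter Set Topology
open scoped RealInnerProductSpace

theorem IsCompact.isBounded_toWeakSpace_preimage {𝕜 E : Type*} [RCLike 𝕜]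
    [NormedAddCommGroup E] [NormedSpace 𝕜 E] {S : Set (WeakSpace 𝕜 E)} (hS : IsCompact S) :
    IsBounded (toWeakSpace 𝕜 E ⁻¹' S) := by
  have hpointwise : ∀ ℓ : StrongDual 𝕜 E, ∃ C, ∀ x : toWeakSpace 𝕜 E ⁻¹' S,
      ‖NormedSpace.inclusionInDoubleDual 𝕜 E x ℓ‖ ≤ C := fun ℓ =>
    (hS.image (WeakBilin.eval_continuous _ ℓ)).isBounded.exists_norm_le.imp
      fun _ hC x => hC _ ⟨_, x.2, rfl⟩
  obtain ⟨C, hC⟩ := banach_steinhaus hpointwise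
  exact isBounded_iff_forall_norm_le.2
    ⟨C, fun x hx => (NormedSpace.inclusionInDoubleDualLi 𝕜).norm_map x ▸ hC ⟨x, hx⟩⟩

theorem continuousOn_apply_toWeakSpace_symm {X 𝕜 E : Type*} [TopologicalSpace X]
    [NontriviallyNormedField 𝕜] [SeminormedAddCommGroup E] [NormedSpace 𝕜 E]
    {L : X → StrongDual 𝕜 E} (hL : Continuous L) (R : ℝ) :
    ContinuousOn (fun p : X × WeakSpace 𝕜 E => L p.1 ((toWeakSpace 𝕜 E).symm p.2))
      {p | ‖(toWeakSpace 𝕜 E).symm p.2‖ ≤ R} := by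
  intro p₀ _
  have hsmall : Tendsto
      (fun p : X × WeakSpace 𝕜 E => (L p.1 - L p₀.1) ((toWeakSpace 𝕜 E).symm p.2))
      (𝓝[{p | ‖(toWeakSpace 𝕜 E).symm p.2‖ ≤ R}] p₀) (𝓝 0) := by
    refine squeeze_zero_norm' (eventually_nhdsWithin_of_forall fun p hp =>
      ((L p.1 - L p₀.1).le_opNorm _).trans (mul_le_mul_of_nonneg_left hp (norm_nonneg _))) ?_
    have h := (((hL.comp continuous_fst).sub (continuous_const (y := L p₀.1))).norm.mul_const
      R).tendsto p₀
    simp only [Pi.sub_apply, Function.comp_apply, sub_self, norm_zero, zero_mul] at h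
    exact h.mono_left nhdsWithin_le_nhds
  have hfixed : Continuous fun p : X × WeakSpace 𝕜 E => L p₀.1 ((toWeakSpace 𝕜 E).symm p.2) :=
    (WeakBilin.eval_continuous _ (L p₀.1)).comp continuous_snd
  simpa [ContinuousWithinAt] using hsmall.add hfixed.continuousWithinAt

theorem norm_sub_lt_of_inner_midpoint_near_sup {H : Type*} [NormedAddCommGroup H]
    [InnerProductSpace ℝ H] {v₀ p q : H} {a s ε : ℝ} (hε : 0 < ε)
    (hv₀ : a - ε ^ 2 / 8 < ‖v₀‖ ^ 2) (hs : ‖v₀‖ ^ 2 ≤ s) (hp : ‖p‖ ^ 2 ≤ a) (hq : ‖q‖ ^ 2 ≤ a)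
    (hps : ⟪v₀, p⟫ ≤ s) (hqs : ⟪v₀, q⟫ ≤ s) (hmid : s - ε ^ 2 / 32 < ⟪v₀, midpoint ℝ p q⟫) :
    ‖p - q‖ < ε := by
  rw [midpoint_eq_smul_add, inner_smul_right, inner_add_right, invOf_eq_inv] at hmid
  have hclose : ∀ z : H, ‖z‖ ^ 2 ≤ a → s - ε ^ 2 / 16 < ⟪v₀, z⟫ → ‖z - v₀‖ < ε / 2 := by
    intro z hz hzv
    refine lt_of_pow_lt_pow_left₀ 2 (by positivity) ?_
    rw [norm_sub_sq_real, real_inner_comm]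
    linarith
  calc ‖p - q‖ = ‖(p - v₀) - (q - v₀)‖ := by rw [sub_sub_sub_cancel_right]
    _ ≤ ‖p - v₀‖ + ‖q - v₀‖ := norm_sub_le _ _
    _ < ε / 2 + ε / 2 := add_lt_add (hclose p hp (by linarith)) (hclose q hq (by linarith))
    _ = ε := add_halves ε

theorem eq_univ_of_isClosed_of_mapsTo {X Γ : Type*} [TopologicalSpace X] {act : Γ → X → X}
    (hmin : ∀ x, Dense (range fun f => act f x)) {C : Set X} (hC : IsClosed C)
    (hne : C.Nonempty) (hmaps : ∀ f, MapsTo (act f) C C) : C = univ := by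
  obtain ⟨x, hx⟩ := hne
  exact eq_univ_of_univ_subset <|
    (hmin x).closure_eq ▸ closure_minimal (range_subset_iff.2 fun f => hmaps f hx) hC

section AffineCocycle

variable {X Γ H : Type*} [Monoid Γ] [NormedAddCommGroup H] [InnerProductSpace ℝ H]
  {act : Γ → X → X} {Ψ : Γ → X → (H ≃ₗᵢ[ℝ] H)} {ρ : Γ → X → H}

theorem affine_cocycle_mul_apply (hΨ_coc : ∀ f g x v, Ψ (f * g) x v = Ψ f (act g x) (Ψ g x v))
    (hρ_coc : ∀ f g x, ρ (f * g) x = ρ f (act g x) + Ψ f (act g x) (ρ g x)) (f g : Γ) (x : X)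
    (v : H) :
    Ψ (f * g) x v + ρ (f * g) x = Ψ f (act g x) (Ψ g x v + ρ g x) + ρ f (act g x) := by
  rw [hΨ_coc, hρ_coc, map_add]
  abel

theorem affine_cocycle_one_apply (hact_one : ∀ x, act 1 x = x)
    (hΨ_coc : ∀ f g x v, Ψ (f * g) x v = Ψ f (act g x) (Ψ g x v))
    (hρ_coc : ∀ f g x, ρ (f * g) x = ρ f (act g x) + Ψ f (act g x) (ρ g x)) (x : X) (v : H) :
    Ψ 1 x v + ρ 1 x = v := by
  have hidem := affine_cocycle_mul_apply hΨ_coc hρ_coc 1 1 x v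
  rw [one_mul, hact_one] at hidem
  exact (Ψ 1 x).injective (add_right_cancel hidem.symm)

end AffineCocycle

theorem continuousOn_inner_affine_apply {X H : Type*} [TopologicalSpace X] [NormedAddCommGroup H]
    [InnerProductSpace ℝ H] {Ψ : X → (H ≃ₗᵢ[ℝ] H)} {ρ : X → H}
    (hΨ : Continuous fun x => ((Ψ x).toLinearIsometry.toContinuousLinearMap : H →L[ℝ] H))
    (hρ : Continuous ρ) (v₀ : H) (R : ℝ) :
    ContinuousOn (fun p : X × WeakSpace ℝ H =>
        ⟪v₀, Ψ p.1 ((toWeakSpace ℝ H).symm p.2) + ρ p.1⟫)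
      {p | ‖(toWeakSpace ℝ H).symm p.2‖ ≤ R} := by
  have hlin := continuousOn_apply_toWeakSpace_symm (continuous_const.clm_comp hΨ
    (g := fun _ => innerSL ℝ v₀)) R
  simp only [inner_add_right]
  exact hlin.add (continuous_const.inner (hρ.comp continuous_fst)).continuousOn

structure IsInvariantConvexCompact {X Γ H : Type*} [TopologicalSpace X] [NormedAddCommGroup H]
    [InnerProductSpace ℝ H] (act : Γ → X → X) (Ψ : Γ → X → (H ≃ₗᵢ[ℝ] H)) (ρ : Γ → X → H)
    (M : Set (X × H)) : Prop where
  nonempty : M.Nonempty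
  isCompact : IsCompact (Prod.map id (toWeakSpace ℝ H).symm ⁻¹' M)
  mapsTo : ∀ f x v, (x, v) ∈ M → (act f x, Ψ f x v + ρ f x) ∈ M
  convex : ∀ x, Convex ℝ {v | (x, v) ∈ M}

namespace IsInvariantConvexCompact

variable {X Γ H : Type*} [TopologicalSpace X] [NormedAddCommGroup H]
  [InnerProductSpace ℝ H] {act : Γ → X → X} {Ψ : Γ → X → (H ≃ₗᵢ[ℝ] H)} {ρ : Γ → X → H}
  {M : Set (X × H)}

theorem exists_norm_le (hM : IsInvariantConvexCompact act Ψ ρ M) : ∃ R, ∀ p ∈ M, ‖p.2‖ ≤ R :=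
  (isBounded_iff_forall_norm_le.1
    (hM.isCompact.image continuous_snd).isBounded_toWeakSpace_preimage).imp
      fun _ hR p hp => hR p.2 ⟨(p.1, p.2), hp, rfl⟩

theorem fst_image_eq_univ [T2Space X] (hM : IsInvariantConvexCompact act Ψ ρ M)
    (hmin : ∀ x, Dense (range fun f => act f x)) : Prod.fst '' M = univ :=
  eq_univ_of_isClosed_of_mapsTo hmin (hM.isCompact.image continuous_fst).isClosed
    (hM.nonempty.image _) fun f _ ⟨p, hp, hx⟩ => hx ▸ ⟨_, hM.mapsTo f p.1 p.2 hp, rfl⟩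

variable [Monoid Γ]

theorem sep_forall_inner_le [T2Space X]
    (hΨ_coc : ∀ f g x v, Ψ (f * g) x v = Ψ f (act g x) (Ψ g x v))
    (hρ_coc : ∀ f g x, ρ (f * g) x = ρ f (act g x) + Ψ f (act g x) (ρ g x))
    (hΨ_cont : ∀ f, Continuous fun x =>
      ((Ψ f x).toLinearIsometry.toContinuousLinearMap : H →L[ℝ] H))
    (hρ_cont : ∀ f, Continuous fun x => ρ f x)
    (hM : IsInvariantConvexCompact act Ψ ρ M) (v₀ : H) (c : ℝ)
    (hne : {p ∈ M | ∀ f, ⟪v₀, Ψ f p.1 p.2 + ρ f p.1⟫ ≤ c}.Nonempty) :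
    IsInvariantConvexCompact act Ψ ρ {p ∈ M | ∀ f, ⟪v₀, Ψ f p.1 p.2 + ρ f p.1⟫ ≤ c} where
  nonempty := hne
  isCompact := by
    obtain ⟨R, hR⟩ := hM.exists_norm_le
    have hMw := hM.isCompact
    refine hMw.of_isClosed_subset ?_ fun p hp => hp.1
    have hsep : Prod.map id (toWeakSpace ℝ H).symm ⁻¹'
        {p ∈ M | ∀ f, ⟪v₀, Ψ f p.1 p.2 + ρ f p.1⟫ ≤ c} =
        ⋂ f, Prod.map id (toWeakSpace ℝ H).symm ⁻¹' M ∩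
          (fun p : X × WeakSpace ℝ H => ⟪v₀, Ψ f p.1 ((toWeakSpace ℝ H).symm p.2) + ρ f p.1⟫) ⁻¹'
            Iic c := by
      ext p
      simp [forall_and]
    rw [hsep]
    exact isClosed_iInter fun f =>
      ((continuousOn_inner_affine_apply (hΨ_cont f) (hρ_cont f) v₀ R).mono
        fun p hp => hR _ hp).preimage_isClosed_of_isClosed hMw.isClosed isClosed_Iic
  mapsTo f x v hv := ⟨hM.mapsTo f x v hv.1, fun g =>
    affine_cocycle_mul_apply hΨ_coc hρ_coc g f x v ▸ hv.2 (g * f)⟩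
  convex x := by
    have hhalf : ∀ f, Convex ℝ {v | ⟪v₀, Ψ f x v + ρ f x⟫ ≤ c} := fun f =>
      (((convex_Iic c).linear_preimage (innerₛₗ ℝ v₀)).translate_preimage_left
        (ρ f x)).linear_preimage (Ψ f x).toLinearEquiv.toLinearMap
    exact fun v₁ h₁ v₂ h₂ a b ha hb hab =>
      ⟨hM.convex x h₁.1 h₂.1 ha hb hab, fun f => hhalf f (h₁.2 f) (h₂.2 f) ha hb hab⟩

theorem exists_lt_inner_of_minimal [T2Space X] (hact_one : ∀ x, act 1 x = x)
    (hΨ_coc : ∀ f g x v, Ψ (f * g) x v = Ψ f (act g x) (Ψ g x v))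
    (hρ_coc : ∀ f g x, ρ (f * g) x = ρ f (act g x) + Ψ f (act g x) (ρ g x))
    (hΨ_cont : ∀ f, Continuous fun x =>
      ((Ψ f x).toLinearIsometry.toContinuousLinearMap : H →L[ℝ] H))
    (hρ_cont : ∀ f, Continuous fun x => ρ f x)
    (hM : IsInvariantConvexCompact act Ψ ρ M)
    (hmin : ∀ M' ⊆ M, IsInvariantConvexCompact act Ψ ρ M' → M' = M)
    (v₀ : H) {c : ℝ} {q : X × H} (hq : q ∈ M) (hc : c < ⟪v₀, q.2⟫) {p : X × H} (hp : p ∈ M) :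
    ∃ f, c < ⟪v₀, Ψ f p.1 p.2 + ρ f p.1⟫ := by
  by_contra! hp_le
  have hsep := hmin _ (sep_subset _ _)
    (hM.sep_forall_inner_le hΨ_coc hρ_coc hΨ_cont hρ_cont v₀ c ⟨p, hp, hp_le⟩)
  have hq_le := (hsep.ge hq).2 1
  rw [affine_cocycle_one_apply hact_one hΨ_coc hρ_coc] at hq_le
  exact hq_le.not_gt hc

theorem eq_of_mem_of_minimal [T2Space X] (hact_one : ∀ x, act 1 x = x)
    (hΨ_coc : ∀ f g x v, Ψ (f * g) x v = Ψ f (act g x) (Ψ g x v))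
    (hρ_coc : ∀ f g x, ρ (f * g) x = ρ f (act g x) + Ψ f (act g x) (ρ g x))
    (hΨ_cont : ∀ f, Continuous fun x =>
      ((Ψ f x).toLinearIsometry.toContinuousLinearMap : H →L[ℝ] H))
    (hρ_cont : ∀ f, Continuous fun x => ρ f x)
    (hM : IsInvariantConvexCompact act Ψ ρ M)
    (hmin : ∀ M' ⊆ M, IsInvariantConvexCompact act Ψ ρ M' → M' = M)
    {x : X} {u w : H} (hu : (x, u) ∈ M) (hw : (x, w) ∈ M) : u = w := by
  by_contra hne
  set ε := ‖u - w‖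
  have hε : 0 < ε := norm_sub_pos_iff.2 hne
  obtain ⟨R, hR⟩ := hM.exists_norm_le
  set a := sSup ((fun p : X × H => ‖p.2‖ ^ 2) '' M)
  have ha : ∀ p ∈ M, ‖p.2‖ ^ 2 ≤ a := fun p hp =>
    le_csSup ⟨R ^ 2, forall_mem_image.2 fun p hp => pow_le_pow_left₀ (norm_nonneg _) (hR p hp) 2⟩
      ⟨p, hp, rfl⟩
  obtain ⟨_, ⟨p₀, hp₀, rfl⟩, hp₀a⟩ := exists_lt_of_lt_csSup (hM.nonempty.image _)
    (sub_lt_self a (by positivity : 0 < ε ^ 2 / 8))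
  set v₀ := p₀.2
  set s := sSup ((fun p : X × H => ⟪v₀, p.2⟫) '' M)
  have hs : ∀ p ∈ M, ⟪v₀, p.2⟫ ≤ s := fun p hp =>
    le_csSup ⟨‖v₀‖ * R, forall_mem_image.2 fun p hp => (real_inner_le_norm _ _).trans
      (mul_le_mul_of_nonneg_left (hR p hp) (norm_nonneg _))⟩ ⟨p, hp, rfl⟩
  obtain ⟨_, ⟨q, hq, rfl⟩, hqs⟩ := exists_lt_of_lt_csSup (hM.nonempty.image _)
    (sub_lt_self s (by positivity : 0 < ε ^ 2 / 32))
  obtain ⟨f, hf⟩ := hM.exists_lt_inner_of_minimal hact_one hΨ_coc hρ_coc hΨ_cont hρ_cont hmin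
    v₀ hq hqs ((hM.convex x).midpoint_mem hu hw)
  have hmid :
      Ψ f x (midpoint ℝ u w) + ρ f x = midpoint ℝ (Ψ f x u + ρ f x) (Ψ f x w + ρ f x) := by
    simp only [midpoint_eq_smul_add, map_smul, map_add, invOf_eq_inv]
    module
  rw [hmid] at hf
  refine (norm_sub_lt_of_inner_midpoint_near_sup hε hp₀a
    (real_inner_self_eq_norm_sq v₀ ▸ hs p₀ hp₀) (ha _ (hM.mapsTo f x u hu))
    (ha _ (hM.mapsTo f x w hw)) (hs _ (hM.mapsTo f x u hu)) (hs _ (hM.mapsTo f x w hw)) hf).ne ?_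
  rw [add_sub_add_right_eq_sub, ← map_sub, LinearIsometryEquiv.norm_map]

end IsInvariantConvexCompact

theorem minimal_weakly_compact_convex_invariant_set_has_singleton_fibers_general
    {X : Type*} [MetricSpace X]
    {Γ : Type*} [Monoid Γ]
    {H : Type*} [NormedAddCommGroup H] [InnerProductSpace ℝ H]
    (act : Γ → X → X)
    (hact_one : ∀ x, act 1 x = x)
    (hmin : ∀ x, Dense (Set.range fun f => act f x))
    (Ψ : Γ → X → (H ≃ₗᵢ[ℝ] H)) (ρ : Γ → X → H)
    (hΨ_cont : ∀ f, Continuous fun x =>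
      ((Ψ f x).toLinearIsometry.toContinuousLinearMap : H →L[ℝ] H))
    (hρ_cont : ∀ f, Continuous fun x => ρ f x)
    (hΨ_coc : ∀ f g x v, Ψ (f * g) x v = Ψ f (act g x) (Ψ g x v))
    (hρ_coc : ∀ f g x, ρ (f * g) x = ρ f (act g x) + Ψ f (act g x) (ρ g x))
    (M : Set (X × H)) (hM_ne : M.Nonempty)
    (hM_comp : @IsCompact (X × H) (@instTopologicalSpaceProd X H _ (weakTopology H)) M)
    (hM_inv : ∀ f x v, (x, v) ∈ M → (act f x, Ψ f x v + ρ f x) ∈ M)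
    (hM_conv : ∀ x, Convex ℝ {v : H | (x, v) ∈ M})
    (hM_min : ∀ M' : Set (X × H), M' ⊆ M → M'.Nonempty →
      @IsCompact (X × H) (@instTopologicalSpaceProd X H _ (weakTopology H)) M' →
      (∀ f x v, (x, v) ∈ M' → (act f x, Ψ f x v + ρ f x) ∈ M') →
      (∀ x, Convex ℝ {v : H | (x, v) ∈ M'}) →
      M' = M) :
    ∀ x : X, ∃! v : H, (x, v) ∈ M := by
  have hM : IsInvariantConvexCompact act Ψ ρ M := ⟨hM_ne, hM_comp, hM_inv, hM_conv⟩
  have hM_min' : ∀ M' ⊆ M, IsInvariantConvexCompact act Ψ ρ M' → M' = M :=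
    fun M' hM' h => hM_min M' hM' h.nonempty h.isCompact h.mapsTo h.convex
  intro x
  obtain ⟨⟨_, v⟩, hv, rfl⟩ := (hM.fst_image_eq_univ hmin).ge (mem_univ x)
  exact ⟨v, hv, fun w hw =>
    hM.eq_of_mem_of_minimal hact_one hΨ_coc hρ_coc hΨ_cont hρ_cont hM_min' hw hv⟩

/-- For a minimal element `M` of the family of nonempty weakly-compact, skew-invariant subsets
of `X × H` that are convex along the fibers, every fiber `M_x` consists of a single vector. -/
theorem minimal_weakly_compact_convex_invariant_set_has_singleton_fibers
    {X : Type*} [MetricSpace X] [CompactSpace X]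
    {Γ : Type*} [Monoid Γ]
    {H : Type*} [NormedAddCommGroup H] [InnerProductSpace ℝ H] [CompleteSpace H]
    [TopologicalSpace.SeparableSpace H]
    (act : Γ → X → X)
    (hact_one : ∀ x, act 1 x = x)
    (hact_mul : ∀ f g x, act (f * g) x = act f (act g x))
    (hact_cont : ∀ f, Continuous (act f))
    (hmin : ∀ x, Dense (Set.range fun f => act f x))
    (Ψ : Γ → X → (H ≃ₗᵢ[ℝ] H)) (ρ : Γ → X → H)
    (hΨ_cont : ∀ f, Continuous fun x =>
      ((Ψ f x).toLinearIsometry.toContinuousLinearMap : H →L[ℝ] H))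
    (hρ_cont : ∀ f, Continuous fun x => ρ f x)
    (hΨ_coc : ∀ f g x v, Ψ (f * g) x v = Ψ f (act g x) (Ψ g x v))
    (hρ_coc : ∀ f g x, ρ (f * g) x = ρ f (act g x) + Ψ f (act g x) (ρ g x))
    (M : Set (X × H)) (hM_ne : M.Nonempty)
    (hM_comp : @IsCompact (X × H) (@instTopologicalSpaceProd X H _ (weakTopology H)) M)
    (hM_inv : ∀ f x v, (x, v) ∈ M → (act f x, Ψ f x v + ρ f x) ∈ M)
    (hM_conv : ∀ x, Convex ℝ {v : H | (x, v) ∈ M})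
    (hM_min : ∀ M' : Set (X × H), M' ⊆ M → M'.Nonempty →
      @IsCompact (X × H) (@instTopologicalSpaceProd X H _ (weakTopology H)) M' →
      (∀ f x v, (x, v) ∈ M' → (act f x, Ψ f x v + ρ f x) ∈ M') →
      (∀ x, Convex ℝ {v : H | (x, v) ∈ M'}) →
      M' = M) :
    ∀ x : X, ∃! v : H, (x, v) ∈ M :=
  minimal_weakly_compact_convex_invariant_set_has_singleton_fibers_general act hact_one hmin Ψ ρ
    hΨ_cont hρ_cont hΨ_coc hρ_coc M hM_ne hM_comp hM_inv hM_conv hM_min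
end

section
/- Let X be a compact metric space, Γ a monoid acting minimally on X by continuous maps, H a real separable Hilbert space, and (Ψ, ρ) a continuous cocycle of affine isometries of H over this action. Let φ : X → H be weakly continuous (continuous when H is given its weak topology) and skew-invariant: φ(f·x) = Ψ(f,x)(φ(x)) + ρ(f,x) for all f ∈ Γ and x ∈ X. Then φ is strongly continuous, i.e., continuous when H carries its norm topology. -/
/-!
Weak continuity makes `‖φ‖` lower semicontinuous, so by Baire's theorem it is continuous at some
point `x₀`; in a Hilbert space weak convergence together with convergence of the norms is norm
convergence, so `φ` is norm continuous at `x₀`. Skew-invariance under affine isometries transports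
continuity at `x₀` to every point whose orbit accumulates at `x₀`, which by minimality is every
point.
-/

open Filter Set Topology
open scoped RealInnerProductSpace

section Semicontinuity

variable {X : Type*} [TopologicalSpace X]

/-- The sublevel sets `{f ≤ q}`, `q ∈ ℚ`, are closed, so their frontiers are nowhere dense; off the
union of these frontiers `f` is upper semicontinuous. -/
theorem LowerSemicontinuous.eventually_residual_continuousAt {f : X → ℝ}
    (hf : LowerSemicontinuous f) : ∀ᶠ x in residual X, ContinuousAt f x := by
  have hfrontier : ∀ q : ℚ, ∀ᶠ x in residual X, x ∉ frontier (f ⁻¹' Iic (q : ℝ)) := fun q =>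
    residual_of_dense_open isClosed_frontier.isOpen_compl
      (interior_eq_empty_iff_dense_compl.mp (interior_frontier (hf.isClosed_preimage q)))
  filter_upwards [eventually_countable_forall.2 hfrontier] with x hx
  refine continuousAt_iff_lower_upperSemicontinuousAt.2 ⟨hf x, fun r hr => ?_⟩
  obtain ⟨q, hxq, hqr⟩ := exists_rat_btwn hr
  have hx_int : x ∈ interior (f ⁻¹' Iic (q : ℝ)) := by
    by_contra h
    exact hx q ⟨subset_closure hxq.le, h⟩
  filter_upwards [mem_interior_iff_mem_nhds.1 hx_int] with y hy using hy.trans_lt hqr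

theorem LowerSemicontinuous.exists_continuousAt [BaireSpace X] [Nonempty X] {f : X → ℝ}
    (hf : LowerSemicontinuous f) : ∃ x, ContinuousAt f x :=
  (dense_of_mem_residual hf.eventually_residual_continuousAt).nonempty

end Semicontinuity

section InnerProductSpace

variable {H : Type*} [NormedAddCommGroup H] [InnerProductSpace ℝ H]

theorem lowerSemicontinuous_norm_of_continuous_inner {X : Type*} [TopologicalSpace X]
    {φ : X → H} (hφ : ∀ v, Continuous fun x => ⟪φ x, v⟫) :
    LowerSemicontinuous fun x => ‖φ x‖ := by
  intro x b hb
  have hg : ContinuousAt (fun y => ⟪φ y, φ x⟫ / ‖φ x‖) x :=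
    ((hφ (φ x)).div_const _).continuousAt
  -- also true when `φ x = 0`, both sides being `0`
  have hgx : ⟪φ x, φ x⟫ / ‖φ x‖ = ‖φ x‖ := by
    rw [real_inner_self_eq_norm_sq, sq, mul_self_div_self]
  have hbg : b < ⟪φ x, φ x⟫ / ‖φ x‖ := by rw [hgx]; exact hb
  filter_upwards [hg.eventually (lt_mem_nhds hbg)] with y hy
  exact hy.trans_le (div_le_of_le_mul₀ (norm_nonneg _) (norm_nonneg _) (real_inner_le_norm _ _))

theorem tendsto_of_tendsto_inner_of_tendsto_norm {α : Type*} {l : Filter α} {u : α → H} {w : H}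
    (hinner : Tendsto (fun a => ⟪u a, w⟫) l (𝓝 ⟪w, w⟫))
    (hnorm : Tendsto (fun a => ‖u a‖) l (𝓝 ‖w‖)) : Tendsto u l (𝓝 w) := by
  rw [tendsto_iff_norm_sub_tendsto_zero]
  have hsq : Tendsto (fun a => ‖u a - w‖ ^ 2) l (𝓝 0) := by
    simp_rw [norm_sub_sq_real]
    convert ((hnorm.pow 2).sub (hinner.const_mul 2)).add_const (‖w‖ ^ 2) using 2
    rw [real_inner_self_eq_norm_sq]
    ring
  simpa [Real.sqrt_sq (norm_nonneg _)] using hsq.sqrt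

end InnerProductSpace

section SkewInvariant

variable {R E : Type*} [Semiring R] [NormedAddCommGroup E] [Module R E]

theorem LinearIsometry.dist_le_dist_add_add (A : E →ₗᵢ[R] E) (u v a b w : E) :
    dist u v ≤ dist (A u + a) (w + b) + dist a b + dist (A v) w := by
  calc dist u v = ‖(A u + a - (w + b)) - (a - b) - (A v - w)‖ := by
        rw [dist_eq_norm, ← A.norm_map, map_sub]
        congr 1
        abel
    _ ≤ ‖A u + a - (w + b)‖ + ‖a - b‖ + ‖A v - w‖ :=
        (norm_sub_le _ _).trans (by gcongr; exact norm_sub_le _ _)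
    _ = dist (A u + a) (w + b) + dist a b + dist (A v) w := by simp only [dist_eq_norm]

/-- Continuity of a skew-invariant section at `x₀` propagates to every `x` whose orbit
accumulates at `x₀`: the cocycle at a fixed `f` moves `x` close to `x₀` while being continuous
in `x`, and it acts isometrically. -/
theorem continuousAt_of_skew_invariant_of_mem_closure_orbit {X Γ : Type*} [TopologicalSpace X]
    (act : Γ → X → X) (Ψ : Γ → X → E →ₗᵢ[R] E) (ρ : Γ → X → E) (φ : X → E)
    (hφ_inv : ∀ f x, φ (act f x) = Ψ f x (φ x) + ρ f x) {x x₀ : X}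
    (hx₀ : ContinuousAt φ x₀) (horbit : x₀ ∈ closure (range fun f => act f x))
    (hact : ∀ f, ContinuousAt (act f) x) (hΨ : ∀ f, ContinuousAt (fun y => Ψ f y (φ x)) x)
    (hρ : ∀ f, ContinuousAt (ρ f) x) : ContinuousAt φ x := by
  rw [Metric.continuousAt_iff']
  intro ε hε
  obtain ⟨U, hU, hU_open, hx₀U⟩ :=
    eventually_nhds_iff.1 (Metric.continuousAt_iff'.1 hx₀ (ε / 4) (by positivity))
  obtain ⟨_, hfx, f, rfl⟩ := mem_closure_iff.1 horbit U hU_open hx₀U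
  filter_upwards [(hact f).eventually (hU_open.mem_nhds hfx),
    Metric.continuousAt_iff'.1 (hΨ f) (ε / 4) (by positivity),
    Metric.continuousAt_iff'.1 (hρ f) (ε / 4) (by positivity)] with y hfy hΨy hρy
  have hsplit := (Ψ f y).dist_le_dist_add_add (φ y) (φ x) (ρ f y) (ρ f x) (Ψ f x (φ x))
  rw [← hφ_inv, ← hφ_inv] at hsplit
  have hfar := dist_triangle_right (φ (act f y)) (φ (act f x)) (φ x₀)
  linarith [hU _ hfy, hU _ hfx]

end SkewInvariant

theorem weakly_continuous_invariant_section_is_strongly_continuous_general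
    {X : Type*} [MetricSpace X] [CompactSpace X]
    {Γ : Type*}
    {H : Type*} [NormedAddCommGroup H] [InnerProductSpace ℝ H]
    (act : Γ → X → X)
    (hact_cont : ∀ f, Continuous (act f))
    (hmin : ∀ x, Dense (Set.range fun f => act f x))
    (Ψ : Γ → X → (H ≃ₗᵢ[ℝ] H)) (ρ : Γ → X → H)
    (hΨ_cont : ∀ f, Continuous fun x =>
      ((Ψ f x).toLinearIsometry.toContinuousLinearMap : H →L[ℝ] H))
    (hρ_cont : ∀ f, Continuous fun x => ρ f x)
    (φ : X → H)
    (hφ_weak : ∀ v : H, Continuous fun x => (inner ℝ (φ x) v : ℝ))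
    (hφ_inv : ∀ f x, φ (act f x) = Ψ f x (φ x) + ρ f x) :
    Continuous φ := by
  refine continuous_iff_continuousAt.2 fun x => ?_
  have : Nonempty X := ⟨x⟩
  obtain ⟨x₀, hnorm⟩ := (lowerSemicontinuous_norm_of_continuous_inner hφ_weak).exists_continuousAt
  have hx₀ : ContinuousAt φ x₀ :=
    tendsto_of_tendsto_inner_of_tendsto_norm ((hφ_weak (φ x₀)).tendsto x₀) hnorm
  exact continuousAt_of_skew_invariant_of_mem_closure_orbit act
    (fun f y => (Ψ f y).toLinearIsometry) ρ φ hφ_inv hx₀ ((hmin x).closure_eq ▸ mem_univ x₀)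
    (fun f => (hact_cont f).continuousAt)
    (fun f => ((hΨ_cont f).clm_apply continuous_const).continuousAt)
    (fun f => (hρ_cont f).continuousAt)

/-- Every weakly-continuous skew-invariant section of a continuous cocycle of affine isometries
of a real separable Hilbert space over a minimal dynamics is strongly (norm) continuous. -/
theorem weakly_continuous_invariant_section_is_strongly_continuous
    {X : Type*} [MetricSpace X] [CompactSpace X]
    {Γ : Type*} [Monoid Γ]
    {H : Type*} [NormedAddCommGroup H] [InnerProductSpace ℝ H] [CompleteSpace H]
    [TopologicalSpace.SeparableSpace H]
    (act : Γ → X → X)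
    (hact_one : ∀ x, act 1 x = x)
    (hact_mul : ∀ f g x, act (f * g) x = act f (act g x))
    (hact_cont : ∀ f, Continuous (act f))
    (hmin : ∀ x, Dense (Set.range fun f => act f x))
    (Ψ : Γ → X → (H ≃ₗᵢ[ℝ] H)) (ρ : Γ → X → H)
    (hΨ_cont : ∀ f, Continuous fun x =>
      ((Ψ f x).toLinearIsometry.toContinuousLinearMap : H →L[ℝ] H))
    (hρ_cont : ∀ f, Continuous fun x => ρ f x)
    (hΨ_coc : ∀ f g x v, Ψ (f * g) x v = Ψ f (act g x) (Ψ g x v))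
    (hρ_coc : ∀ f g x, ρ (f * g) x = ρ f (act g x) + Ψ f (act g x) (ρ g x))
    (φ : X → H)
    (hφ_weak : ∀ v : H, Continuous fun x => (inner ℝ (φ x) v : ℝ))
    (hφ_inv : ∀ f x, φ (act f x) = Ψ f x (φ x) + ρ f x) :
    Continuous φ :=
  weakly_continuous_invariant_section_is_strongly_continuous_general act hact_cont hmin Ψ ρ hΨ_cont
    hρ_cont φ hφ_weak hφ_inv
end

section
/- Let (X, μ) be a probability space and T : X → X a measurable map preserving μ. Let H = ℓ²(ℤ, ℝ) and let S : H → H be the bilateral shift, the linear isometry defined by (S v)(n) = v(n−1) for all n ∈ ℤ. If φ : X → H is a measurable map such that S(φ(x)) = φ(T(x)) for μ-almost every x ∈ X, then φ(x) = 0 for μ-almost every x ∈ X. In particular, the bilateral shift cocycle is weakly ergodic with respect to every T-invariant probability measure. -/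
open MeasureTheory Filter Topology

/-- Weak ergodicity of the bilateral shift cocycle: if `T` preserves a probability measure `μ`
and `φ : X → ℓ²(ℤ, ℝ)` is measurable with `S (φ x) = φ (T x)` a.e., where `S` is the bilateral
shift `(S v)(n) = v(n-1)`, then `φ = 0` a.e. -/
theorem bilateral_shift_weakly_ergodic
    {X : Type*} [MeasurableSpace X] (μ : Measure X) [IsProbabilityMeasure μ]
    (T : X → X) (hT : MeasurePreserving T μ μ)
    (S : lp (fun _ : ℤ => ℝ) 2 →ₗᵢ[ℝ] lp (fun _ : ℤ => ℝ) 2)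
    (hS : ∀ (v : lp (fun _ : ℤ => ℝ) 2) (n : ℤ), (S v : ∀ _ : ℤ, ℝ) n = v (n - 1))
    (φ : X → lp (fun _ : ℤ => ℝ) 2)
    (hφ_meas : @Measurable X (lp (fun _ : ℤ => ℝ) 2) _ (borel _) φ)
    (hφ_inv : ∀ᵐ x ∂μ, S (φ x) = φ (T x)) :
    ∀ᵐ x ∂μ, φ x = 0 := by
  letI : MeasurableSpace (lp (fun _ : ℤ => ℝ) 2) := borel _
  haveI : BorelSpace (lp (fun _ : ℤ => ℝ) 2) := ⟨rfl⟩
  haveI : Fact ((1 : ENNReal) ≤ 2) := ⟨one_le_two⟩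
  -- evaluation at a coordinate is continuous
  have hconteval : ∀ n : ℤ, Continuous
      (fun f : lp (fun _ : ℤ => ℝ) 2 => (f : ∀ _ : ℤ, ℝ) n) := fun n =>
    (continuous_apply n).comp (lp.uniformContinuous_coe (p := 2)).continuous
  have hmeval : ∀ n : ℤ, Measurable (fun x => (φ x : ∀ _ : ℤ, ℝ) n) := fun n =>
    ((hconteval n).measurable).comp hφ_meas
  -- the cocycle identity holds along all iterates, a.e.
  have hA : ∀ᵐ x ∂μ, ∀ k : ℕ, S (φ (T^[k] x)) = φ (T (T^[k] x)) := by
    rw [ae_all_iff]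
    intro k
    exact (hT.iterate k).quasiMeasurePreserving.ae hφ_inv
  have key : ∀ᵐ x ∂μ, ∀ (k : ℕ) (n : ℤ),
      (φ (T^[k] x) : ∀ _ : ℤ, ℝ) n = (φ x : ∀ _ : ℤ, ℝ) (n - k) := by
    filter_upwards [hA] with x hx
    intro k
    induction k with
    | zero => simp
    | succ k ih =>
      intro n
      have h1 : φ (T^[k + 1] x) = S (φ (T^[k] x)) := by
        rw [Function.iterate_succ_apply', hx k]
      rw [h1, hS, ih (n - 1)]
      push_cast
      ring_nf
  -- each coordinate vanishes a.e.
  have hzero : ∀ n : ℤ, ∀ᵐ x ∂μ, (φ x : ∀ _ : ℤ, ℝ) n = 0 := by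
    intro n
    set g : X → ℝ := fun x => min |(φ x : ∀ _ : ℤ, ℝ) n| 1 with hg
    have hgmeas : Measurable g := ((hmeval n).abs).min measurable_const
    have hgnonneg : ∀ x, 0 ≤ g x := fun x => le_min (abs_nonneg _) zero_le_one
    have hgle : ∀ x, ‖g x‖ ≤ 1 := fun x => by
      rw [Real.norm_eq_abs, abs_of_nonneg (hgnonneg x)]
      exact min_le_right _ _
    have hgint : Integrable g μ :=
      (integrable_const (1 : ℝ)).mono' hgmeas.aestronglyMeasurable
        (Eventually.of_forall hgle)
    have hconst : ∀ k : ℕ, ∫ x, g (T^[k] x) ∂μ = ∫ x, g x ∂μ := fun k => by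
      calc ∫ x, g (T^[k] x) ∂μ
          = ∫ y, g y ∂(μ.map T^[k]) :=
            (integral_map (hT.iterate k).measurable.aemeasurable
              hgmeas.aestronglyMeasurable).symm
        _ = ∫ x, g x ∂μ := by rw [(hT.iterate k).map_eq]
    have htend : ∀ᵐ x ∂μ, Tendsto (fun k : ℕ => g (T^[k] x)) atTop (𝓝 0) := by
      filter_upwards [key] with x hx
      have hsum : Summable fun m : ℤ => ‖(φ x : ∀ _ : ℤ, ℝ) m‖ ^ (2 : ENNReal).toReal :=
        (lp.memℓp (φ x)).summable (by norm_num)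
      have hcof : Tendsto (fun m : ℤ => ‖(φ x : ∀ _ : ℤ, ℝ) m‖ ^ (2 : ENNReal).toReal)
          cofinite (𝓝 0) := hsum.tendsto_cofinite_zero
      have hinj : Function.Injective (fun k : ℕ => n - (k : ℤ)) := by
        intro a b h
        simpa using h
      have hmap : Tendsto (fun k : ℕ => n - (k : ℤ)) atTop cofinite := by
        rw [← Nat.cofinite_eq_atTop]
        exact hinj.tendsto_cofinite
      have h2 : Tendsto (fun k : ℕ => ‖(φ x : ∀ _ : ℤ, ℝ) (n - k)‖ ^ (2 : ENNReal).toReal)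
          atTop (𝓝 0) := hcof.comp hmap
      have habs : Tendsto (fun k : ℕ => |(φ x : ∀ _ : ℤ, ℝ) (n - k)|) atTop (𝓝 0) := by
        have hsqrt := (Real.continuous_sqrt.tendsto 0).comp h2
        simp only [Function.comp_def, Real.sqrt_zero] at hsqrt
        convert hsqrt using 2 with k
        rw [ENNReal.toReal_ofNat, Real.norm_eq_abs, Real.rpow_two, Real.sqrt_sq_eq_abs, abs_abs]
      have : Tendsto (fun k : ℕ => min |(φ x : ∀ _ : ℤ, ℝ) (n - k)| 1) atTop (𝓝 (min 0 1)) :=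
        habs.min tendsto_const_nhds
      rw [min_eq_left zero_le_one] at this
      refine this.congr fun k => ?_
      simp only [hg, hx k n]
    have hint0 : ∫ x, g x ∂μ = 0 := by
      have hdom : Tendsto (fun k : ℕ => ∫ x, g (T^[k] x) ∂μ) atTop (𝓝 (∫ _x, (0 : ℝ) ∂μ)) := by
        refine tendsto_integral_of_dominated_convergence (fun _ => 1)
          (fun k => (hgmeas.comp (hT.iterate k).measurable).aestronglyMeasurable)
          (integrable_const 1) (fun k => Eventually.of_forall fun x => hgle _) htend
      rw [integral_zero] at hdom
      have hdom' : Tendsto (fun _k : ℕ => ∫ x, g x ∂μ) atTop (𝓝 (0 : ℝ)) := by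
        refine hdom.congr fun k => hconst k
      exact tendsto_nhds_unique tendsto_const_nhds hdom'
    have := (integral_eq_zero_iff_of_nonneg hgnonneg hgint).mp hint0
    filter_upwards [this] with x hx
    have : g x = 0 := hx
    have habs0 : |(φ x : ∀ _ : ℤ, ℝ) n| = 0 := by
      rcases min_eq_iff.mp this with h | h
      · exact h.1
      · linarith [h.1]
    exact abs_eq_zero.mp habs0
  have hall : ∀ᵐ x ∂μ, ∀ n : ℤ, (φ x : ∀ _ : ℤ, ℝ) n = 0 := ae_all_iff.mpr hzero
  filter_upwards [hall] with x hx
  ext n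
  simp [hx n]
end
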